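/- Let Γ : ℝⁿ → ℝ and h : ℝⁿ → ℝ be functions, ν, η ≥ 0 Lipschitz constants such that |Γ(a) − Γ(b)| ≤ ν‖a − b‖ and |h(a) − h(b)| ≤ η‖a − b‖ for all a, b in a compact set X ⊆ ℝⁿ. Let X_g ⊆ X be a finite nonempty set with Γ(x_g) ≤ −h(x_g) for all x_g ∈ X_g, and suppose ρ̄ ≥ 0 satisfies: for every x ∈ X there exists x_g ∈ X_g with ‖x − x_g‖ ≤ ρ̄. Fix 0 < φ < 1 and set ζ = (η + ν) ρ̄ / (1 − φ). Then for every x ∈ X with h(x) ≥ ζ, it holds that Γ(x) ≤ −φ h(x). -/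

import Mathlib

/-! Moving from `x` to a grid point within distance `ρ̄` changes `Γ + h` by at most `(η + ν) ρ̄`;
once `h x ≥ ζ`, this slack is at most `(1 - φ) h x`. -/

theorem add_le_mul_of_norm_sub_le {E : Type*} [SeminormedAddGroup E] {Γ h : E → ℝ}
    {ν η ρ : ℝ} {x y : E} (hν : 0 ≤ ν) (hη : 0 ≤ η)
    (hΓ : |Γ x - Γ y| ≤ ν * ‖x - y‖) (hh : |h x - h y| ≤ η * ‖x - y‖)
    (hy : Γ y + h y ≤ 0) (hxy : ‖x - y‖ ≤ ρ) :
    Γ x + h x ≤ (η + ν) * ρ :=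
  calc Γ x + h x = (Γ x - Γ y) + (h x - h y) + (Γ y + h y) := by ring
    _ ≤ ν * ‖x - y‖ + η * ‖x - y‖ + 0 :=
        add_le_add (add_le_add (abs_le.mp hΓ).2 (abs_le.mp hh).2) hy
    _ ≤ (η + ν) * ρ := by nlinarith

theorem granularity_bound_general {n : ℕ}
    (X : Set (EuclideanSpace ℝ (Fin n)))
    (Γ h : EuclideanSpace ℝ (Fin n) → ℝ)
    (ν η : ℝ) (hν : 0 ≤ ν) (hη : 0 ≤ η)
    (hΓlip : ∀ a ∈ X, ∀ b ∈ X, |Γ a - Γ b| ≤ ν * ‖a - b‖)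
    (hhlip : ∀ a ∈ X, ∀ b ∈ X, |h a - h b| ≤ η * ‖a - b‖)
    (Xg : Set (EuclideanSpace ℝ (Fin n))) (hXg : Xg ⊆ X)
    (hgrid : ∀ xg ∈ Xg, Γ xg ≤ -h xg)
    (ρbar : ℝ)
    (hcover : ∀ x ∈ X, ∃ xg ∈ Xg, ‖x - xg‖ ≤ ρbar)
    (φ : ℝ) (hφ1 : φ < 1) :
    ∀ x ∈ X, (η + ν) * ρbar / (1 - φ) ≤ h x → Γ x ≤ -φ * h x := by
  intro x hx hζ
  obtain ⟨xg, hxg, hdist⟩ := hcover x hx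
  have hmargin : Γ x + h x ≤ (η + ν) * ρbar :=
    add_le_mul_of_norm_sub_le hν hη (hΓlip x hx xg (hXg hxg)) (hhlip x hx xg (hXg hxg))
      (by linarith [hgrid xg hxg]) hdist
  have hslack : (η + ν) * ρbar ≤ h x * (1 - φ) := (div_le_iff₀ (sub_pos.2 hφ1)).mp hζ
  linarith

theorem granularity_bound {n : ℕ}
    (X : Set (EuclideanSpace ℝ (Fin n))) (hX : IsCompact X)
    (Γ h : EuclideanSpace ℝ (Fin n) → ℝ)
    (ν η : ℝ) (hν : 0 ≤ ν) (hη : 0 ≤ η)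
    (hΓlip : ∀ a ∈ X, ∀ b ∈ X, |Γ a - Γ b| ≤ ν * ‖a - b‖)
    (hhlip : ∀ a ∈ X, ∀ b ∈ X, |h a - h b| ≤ η * ‖a - b‖)
    (Xg : Set (EuclideanSpace ℝ (Fin n))) (hXg : Xg ⊆ X)
    (hXgfin : Xg.Finite) (hXgne : Xg.Nonempty)
    (hgrid : ∀ xg ∈ Xg, Γ xg ≤ -h xg)
    (ρbar : ℝ) (hρ : 0 ≤ ρbar)
    (hcover : ∀ x ∈ X, ∃ xg ∈ Xg, ‖x - xg‖ ≤ ρbar)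
    (φ : ℝ) (hφ0 : 0 < φ) (hφ1 : φ < 1) :
    ∀ x ∈ X, (η + ν) * ρbar / (1 - φ) ≤ h x → Γ x ≤ -φ * h x :=
  granularity_bound_general X Γ h ν η hν hη hΓlip hhlip Xg hXg hgrid ρbar hcover φ hφ1
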